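/- Let n ≥ 1 and let M ∈ Matₙ(R) be a matrix whose characteristic polynomial is Eisenstein. Let M̄ ∈ Matₙ(k) be the reduction of M modulo 𝔪. Then the centralizer of M̄ in GLₙ(k), i.e. {g ∈ GLₙ(k) : g·M̄ = M̄·g}, is a commutative group. (In the terminology of the paper: M is regular.) -/

import Mathlib

open IsLocalRing

/-- A monic polynomial `x^n + a_{n-1}x^{n-1} + ⋯ + a_0 ∈ R[x]` is Eisenstein if all
lower coefficients lie in `𝔪` and the constant coefficient is not in `𝔪²`. -/
def IsEisensteinPoly (R : Type*) [CommRing R] [IsLocalRing R] (f : Polynomial R) : Prop :=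
  f.Monic ∧ (∀ i < f.natDegree, f.coeff i ∈ maximalIdeal R) ∧
    f.coeff 0 ∉ (maximalIdeal R) ^ 2

/-!
Reducing the Eisenstein characteristic polynomial modulo `𝔪` gives `charpoly M̄ = Xⁿ`, so `M̄` is
nilpotent. It has nilpotency index exactly `n`: if `M̄ⁿ⁻¹ = 0`, every entry of `Mⁿ⁻¹` lies in `𝔪`,
so `(det M)ⁿ⁻¹ ∈ 𝔪ⁿ`, whereas `det M = ±a₀` is a uniformizer. A nilpotent endomorphism of index
`n = dim V` has a cyclic vector `v`, so anything commuting with it is determined by the image of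
`v`, hence is a polynomial in it; polynomials in one endomorphism commute with each other.
-/

open Polynomial

namespace Module.End

section CommSemiring

variable {R M : Type*} [CommSemiring R] [AddCommMonoid M] [Module R M]

def IsCyclicVector (f : Module.End R M) (v : M) : Prop :=
  ∀ w : M, ∃ p : R[X], aeval f p v = w

theorem IsCyclicVector.exists_eq_aeval_of_commute {f g : Module.End R M} {v : M}
    (hv : f.IsCyclicVector v) (hg : Commute g f) : ∃ p : R[X], g = aeval f p := by
  obtain ⟨p, hp⟩ := hv (g v)
  refine ⟨p, LinearMap.ext fun w => ?_⟩
  obtain ⟨q, rfl⟩ := hv w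
  have hgq : Commute g (aeval f q) :=
    Algebra.commute_of_mem_adjoin_singleton_of_commute (aeval_mem_adjoin_singleton R f) hg
  calc g (aeval f q v) = aeval f q (g v) := LinearMap.congr_fun hgq.eq v
    _ = aeval f q (aeval f p v) := by rw [hp]
    _ = aeval f p (aeval f q v) := LinearMap.congr_fun ((Commute.all q p).map (aeval f)).eq v

theorem IsCyclicVector.commute {f g h : Module.End R M} {v : M} (hv : f.IsCyclicVector v)
    (hg : Commute g f) (hh : Commute h f) : Commute g h := by
  obtain ⟨p, rfl⟩ := hv.exists_eq_aeval_of_commute hg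
  obtain ⟨q, rfl⟩ := hv.exists_eq_aeval_of_commute hh
  exact (Commute.all p q).map (aeval f)

end CommSemiring

section Field

variable {K V : Type*} [Field K] [AddCommGroup V] [Module K V]

theorem linearIndependent_pow_apply {f : Module.End K V} {v : V} {n : ℕ}
    (h : (f ^ (n + 1)) v = 0) (hv : (f ^ n) v ≠ 0) :
    LinearIndependent K fun i : Fin (n + 1) => (f ^ (i : ℕ)) v := by
  induction n generalizing v with
  | zero => simpa [linearIndependent_unique_iff] using hv
  | succ n ih =>
    have htail : LinearIndependent K fun i : Fin (n + 1) => (f ^ (i : ℕ)) (f v) :=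
      ih (by rwa [← Module.End.mul_apply, ← pow_succ]) (by rwa [← Module.End.mul_apply, ← pow_succ])
    -- `f ^ (n + 1)` kills the span of `f v, …, f ^ (n + 1) v` but not `v`
    have hv_notMem :
        v ∉ Submodule.span K (Set.range fun i : Fin (n + 1) => (f ^ (i : ℕ)) (f v)) := by
      intro hmem
      refine hv (Submodule.span_le.mpr ?_ hmem : v ∈ LinearMap.ker (f ^ (n + 1)))
      rintro _ ⟨i, rfl⟩
      change (f ^ (n + 1) * f ^ (i : ℕ) * f) v = 0
      rw [← pow_add, ← pow_succ, show n + 1 + i + 1 = i + (n + 1 + 1) by omega, pow_add,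
        Module.End.mul_apply, h, map_zero]
    convert htail.finCons hv_notMem using 1
    ext i
    refine Fin.cases ?_ (fun i => ?_) i
    · simp
    · simp [← Module.End.mul_apply, ← pow_succ]

theorem isCyclicVector_of_pow_apply [FiniteDimensional K V] {f : Module.End K V} {v : V} {n : ℕ}
    (hdim : Module.finrank K V = n + 1) (h : (f ^ (n + 1)) v = 0) (hv : (f ^ n) v ≠ 0) :
    f.IsCyclicVector v := by
  intro w
  have hspan := (linearIndependent_pow_apply h hv).span_eq_top_of_card_eq_finrank
    (by rw [Fintype.card_fin, hdim])
  have hw : w ∈ Submodule.span K _ := hspan ▸ Submodule.mem_top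
  obtain ⟨c, hc⟩ := (Submodule.mem_span_range_iff_exists_fun K).mp hw
  refine ⟨∑ i : Fin (n + 1), C (c i) * X ^ (i : ℕ), ?_⟩
  simp [← hc, map_sum, aeval_X_pow]

theorem commute_of_pow_eq_zero_of_pow_ne_zero [FiniteDimensional K V] {f g h : Module.End K V}
    {n : ℕ} (hdim : Module.finrank K V = n + 1) (hf : f ^ (n + 1) = 0) (hf' : f ^ n ≠ 0)
    (hg : Commute g f) (hh : Commute h f) : Commute g h := by
  obtain ⟨v, hv⟩ : ∃ v, (f ^ n) v ≠ 0 := by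
    by_contra! h0
    exact hf' (LinearMap.ext h0)
  exact (isCyclicVector_of_pow_apply hdim (by rw [hf, LinearMap.zero_apply]) hv).commute hg hh

end Field

end Module.End

theorem Matrix.commute_of_pow_eq_zero_of_pow_ne_zero {K ι : Type*} [Field K] [Fintype ι]
    [DecidableEq ι] {A B C : Matrix ι ι K} {n : ℕ} (hcard : Fintype.card ι = n + 1)
    (hA : A ^ (n + 1) = 0) (hA' : A ^ n ≠ 0) (hB : Commute B A) (hC : Commute C A) :
    Commute B C := by
  let φ := Matrix.toLinAlgEquiv' (R := K) (n := ι)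
  have hφ := Module.End.commute_of_pow_eq_zero_of_pow_ne_zero (f := φ A)
    (by rw [Module.finrank_fintype_fun_eq_card, hcard]) (by rw [← map_pow, hA, map_zero])
    (by rwa [← map_pow, ne_eq, map_eq_zero_iff φ φ.injective]) (hB.map φ) (hC.map φ)
  simpa using hφ.map φ.symm

theorem IsEisensteinPoly.isDistinguishedAt {R : Type*} [CommRing R] [IsLocalRing R]
    {f : R[X]} (hf : IsEisensteinPoly R f) : f.IsDistinguishedAt (maximalIdeal R) :=
  ⟨⟨fun hi => hf.2.1 _ hi⟩, hf.1⟩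

theorem Matrix.map_pow_card_eq_zero_of_isDistinguishedAt {R ι : Type*} [CommRing R]
    [Nontrivial R] [Fintype ι] [DecidableEq ι] {I : Ideal R} {M : Matrix ι ι R}
    (hM : M.charpoly.IsDistinguishedAt I) :
    M.map (Ideal.Quotient.mk I) ^ Fintype.card ι = 0 := by
  have hcharpoly : (M.map (Ideal.Quotient.mk I)).charpoly = X ^ Fintype.card ι := by
    rw [M.charpoly_map, hM.map_eq_X_pow, M.charpoly_natDegree_eq_dim]
  simpa [hcharpoly] using (M.map (Ideal.Quotient.mk I)).aeval_self_charpoly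

theorem Matrix.det_mem_pow_card {R ι : Type*} [CommRing R] [Fintype ι] [DecidableEq ι]
    {I : Ideal R} {A : Matrix ι ι R} (hA : ∀ i j, A i j ∈ I) : A.det ∈ I ^ Fintype.card ι := by
  rw [Matrix.det_apply']
  refine Ideal.sum_mem _ fun σ _ => Ideal.mul_mem_left _ _ ?_
  simpa using Ideal.prod_mem_prod (s := Finset.univ) (I := fun _ => I) fun i _ => hA (σ i) i

theorem IsDiscreteValuationRing.irreducible_of_mem_maximalIdeal_of_notMem_sq {R : Type*}
    [CommRing R] [IsDomain R] [IsDiscreteValuationRing R] {x : R}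
    (hx : x ∈ IsLocalRing.maximalIdeal R) (hx2 : x ∉ IsLocalRing.maximalIdeal R ^ 2) :
    Irreducible x := by
  obtain ⟨ϖ, hϖ⟩ := exists_irreducible R
  rw [hϖ.maximalIdeal_eq, Ideal.mem_span_singleton'] at hx
  obtain ⟨u, rfl⟩ := hx
  have hu : IsUnit u := by
    by_contra hu
    have hϖ_mem : ϖ ∈ IsLocalRing.maximalIdeal R :=
      hϖ.maximalIdeal_eq ▸ Ideal.mem_span_singleton_self ϖ
    exact hx2 (sq (IsLocalRing.maximalIdeal R) ▸
      Ideal.mul_mem_mul ((mem_maximalIdeal u).mpr hu) hϖ_mem)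
  exact (irreducible_isUnit_mul hu).mpr hϖ

theorem IsEisensteinPoly.irreducible_det {R ι : Type*} [CommRing R] [IsDomain R]
    [IsDiscreteValuationRing R] [Fintype ι] [DecidableEq ι] [Nonempty ι] {M : Matrix ι ι R}
    (hM : IsEisensteinPoly R M.charpoly) : Irreducible M.det := by
  obtain ⟨-, hlow, hconst⟩ := hM
  have hconst_mem : M.charpoly.coeff 0 ∈ maximalIdeal R :=
    hlow 0 (by rw [M.charpoly_natDegree_eq_dim]; exact Fintype.card_pos)
  rw [M.det_eq_sign_charpoly_coeff, irreducible_isUnit_mul ((isUnit_neg_one).pow _)]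
  exact IsDiscreteValuationRing.irreducible_of_mem_maximalIdeal_of_notMem_sq hconst_mem hconst

theorem Matrix.card_le_of_map_pow_eq_zero {R ι : Type*} [CommRing R] [IsDomain R]
    [IsDiscreteValuationRing R] [Fintype ι] [DecidableEq ι] {M : Matrix ι ι R}
    (hdet : Irreducible M.det) {k : ℕ} (hk : M.map (Ideal.Quotient.mk (maximalIdeal R)) ^ k = 0) :
    Fintype.card ι ≤ k := by
  have hmap : (M ^ k).map (Ideal.Quotient.mk (maximalIdeal R)) = 0 := by rw [Matrix.map_pow, hk]
  have hentries : ∀ i j, (M ^ k) i j ∈ maximalIdeal R := fun i j =>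
    Ideal.Quotient.eq_zero_iff_mem.mp (congr_fun₂ hmap i j)
  have hmem := Matrix.det_mem_pow_card hentries
  rw [Matrix.det_pow, hdet.maximalIdeal_eq, Ideal.span_singleton_pow,
    Ideal.mem_span_singleton] at hmem
  exact (pow_dvd_pow_iff hdet.ne_zero hdet.not_isUnit).mp hmem

/-- If `M ∈ Matₙ(R)` has Eisenstein characteristic polynomial then the
centralizer in `GLₙ(k)` of the reduction `M̄` of `M` modulo `𝔪` is commutative, i.e. `M`
is regular. -/
theorem eisenstein_reduction_regular
    (R : Type*) [CommRing R] [IsDomain R] [IsDiscreteValuationRing R]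
    (n : ℕ) (hn : 1 ≤ n) (M : Matrix (Fin n) (Fin n) R)
    (hM : IsEisensteinPoly R M.charpoly) :
    ∀ g h : GL (Fin n) (R ⧸ maximalIdeal R),
      (g : Matrix (Fin n) (Fin n) (R ⧸ maximalIdeal R)) *
          M.map (Ideal.Quotient.mk (maximalIdeal R)) =
        M.map (Ideal.Quotient.mk (maximalIdeal R)) *
          (g : Matrix (Fin n) (Fin n) (R ⧸ maximalIdeal R)) →
      (h : Matrix (Fin n) (Fin n) (R ⧸ maximalIdeal R)) *
          M.map (Ideal.Quotient.mk (maximalIdeal R)) =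
        M.map (Ideal.Quotient.mk (maximalIdeal R)) *
          (h : Matrix (Fin n) (Fin n) (R ⧸ maximalIdeal R)) →
      g * h = h * g := by
  intro g h hg hh
  let _ := Ideal.Quotient.field (maximalIdeal R)
  obtain ⟨m, rfl⟩ : ∃ m, n = m + 1 := ⟨n - 1, by omega⟩
  have hnil : M.map (Ideal.Quotient.mk (maximalIdeal R)) ^ (m + 1) = 0 := by
    simpa using Matrix.map_pow_card_eq_zero_of_isDistinguishedAt hM.isDistinguishedAt
  have hindex : M.map (Ideal.Quotient.mk (maximalIdeal R)) ^ m ≠ 0 := fun h0 => by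
    simpa using Matrix.card_le_of_map_pow_eq_zero hM.irreducible_det h0
  exact Units.ext (Matrix.commute_of_pow_eq_zero_of_pow_ne_zero (Fintype.card_fin _) hnil hindex
    hg hh).eq
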